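/- arXiv:2605.01702 — 4 statements merged into one kernel-verified Lean document; each statement's English description precedes it below -/
import Mathlib

section
/- Let p ≥ 2 and let 𝔽 denote the set of finite floating-point numbers with p mantissa bits (values of the form ±(1+i/2^p)·2^e). For any floating-point number x with 1 < x ≤ 2, there exists a floating-point number y with 1/2 < y ≤ 1 such that the correctly rounded (round-to-nearest-even) product x ⊗ y equals 1 + 2^{-p} (the successor of 1 in 𝔽). -/
open Real Set

namespace FPPaper

def emin (q : ℕ) : ℤ := -(2:ℤ)^(q-1) + 2
def emax (q : ℕ) : ℤ := (2:ℤ)^(q-1) - 1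

/-- The set of finite floating-point numbers with `p` mantissa bits and `q` exponent bits. -/
def Fset (p q : ℕ) : Set ℝ :=
  {x | ∃ (s : ℝ) (i : ℕ) (e : ℤ), (s = 1 ∨ s = -1) ∧ i ≤ 2^p - 1 ∧
    ((emin q ≤ e ∧ e ≤ emax q ∧ x = s * (1 + (i : ℝ) / 2^p) * (2:ℝ)^e) ∨
     x = s * ((i : ℝ) / 2^p) * (2:ℝ)^(emin q))}

/-- `x` is an even float: the mantissa integer `i` in its representation is even. -/
def EvenFP (p q : ℕ) (x : ℝ) : Prop :=
  ∃ (s : ℝ) (i : ℕ) (e : ℤ), (s = 1 ∨ s = -1) ∧ i ≤ 2^p - 1 ∧ 2 ∣ i ∧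
    ((emin q ≤ e ∧ e ≤ emax q ∧ x = s * (1 + (i : ℝ) / 2^p) * (2:ℝ)^e) ∨
     x = s * ((i : ℝ) / 2^p) * (2:ℝ)^(emin q))

/-- `rnd` is correct round-to-nearest with ties to even, into `Fset p q`. -/
def RoundNE (p q : ℕ) (rnd : ℝ → ℝ) : Prop :=
  ∀ x : ℝ,
    rnd x ∈ Fset p q ∧
    (∀ y ∈ Fset p q, |x - rnd x| ≤ |x - y|) ∧
    (∀ y ∈ Fset p q, y ≠ rnd x → |x - y| = |x - rnd x| → EvenFP p q (rnd x))

/-- `y` is the successor of `x` in `Fset p q`. -/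
def IsSucc (p q : ℕ) (x y : ℝ) : Prop :=
  y ∈ Fset p q ∧ x < y ∧ ∀ z ∈ Fset p q, x < z → y ≤ z

/-- `e` is the binary exponent of the float `x`. -/
def HasExp (p q : ℕ) (x : ℝ) (e : ℤ) : Prop :=
  ((2:ℝ)^(emin q) ≤ |x| ∧ emin q ≤ e ∧ e ≤ emax q ∧ (2:ℝ)^e ≤ |x| ∧ |x| < (2:ℝ)^(e+1)) ∨
  (|x| < (2:ℝ)^(emin q) ∧ e = emin q)

/-- Left-associated iterated rounded sum `0 ⊕ v ⊕ v ⊕ ⋯ ⊕ v` (`n` terms of `v`). -/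
def iterAdd (rnd : ℝ → ℝ) (v : ℝ) : ℕ → ℝ
  | 0 => 0
  | n+1 => rnd (iterAdd rnd v n + v)

/-- Left-associated iterated rounded product of `x` by `w`, `n` times. -/
def iterMul (rnd : ℝ → ℝ) (w : ℝ) (x : ℝ) : ℕ → ℝ
  | 0 => x
  | n+1 => rnd (iterMul rnd w x n * w)

/-!
Write `N = 2^p` and `x = k/N` with `N < k ≤ 2N`, and look for `y = m/(2N)` with `N < m ≤ 2N`.
The only float within `1/N` of `1 + 1/N` is `1 + 1/N` itself, so correct rounding sends `x*y`
to `1 + 1/N` as soon as `|x*y - (1 + 1/N)| < 1/(2N)`, i.e. `|k*m - 2N(N+1)| < N`. This open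
window of length `2N ≥ k` contains a multiple of `k`, and any such multiple has `N < m ≤ 2N`.
-/

lemma emin_nonpos {q : ℕ} (hq : 2 ≤ q) : emin q ≤ 0 := by
  have : (2:ℤ) ≤ 2 ^ (q - 1) := le_self_pow₀ (by norm_num) (by omega)
  unfold emin; omega

lemma emin_le_neg_one {q : ℕ} (hq : 3 ≤ q) : emin q ≤ -1 := by
  have : (2:ℤ) ^ 2 ≤ 2 ^ (q - 1) := pow_le_pow_right₀ (by norm_num) (by omega)
  unfold emin; omega

lemma emax_nonneg (q : ℕ) : 0 ≤ emax q := by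
  have : (1:ℤ) ≤ 2 ^ (q - 1) := one_le_pow₀ (by norm_num)
  unfold emax; omega

lemma natCast_div_mul_zpow_mem_Fset {p q k : ℕ} (hk₁ : 2 ^ p ≤ k) (hk₂ : k < 2 * 2 ^ p)
    {e : ℤ} (he₁ : emin q ≤ e) (he₂ : e ≤ emax q) : (k : ℝ) / 2 ^ p * 2 ^ e ∈ Fset p q := by
  refine ⟨1, k - 2 ^ p, e, Or.inl rfl, by omega, Or.inl ⟨he₁, he₂, ?_⟩⟩
  rw [Nat.cast_sub hk₁]
  push_cast
  field_simp
  ring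

lemma natCast_div_two_mul_mem_Fset {p q m : ℕ} (hq : 3 ≤ q) (hm₁ : 2 ^ p ≤ m)
    (hm₂ : m ≤ 2 * 2 ^ p) : (m : ℝ) / (2 * 2 ^ p) ∈ Fset p q := by
  rcases hm₂.lt_or_eq with hm₂ | rfl
  · convert natCast_div_mul_zpow_mem_Fset (q := q) (e := -1) hm₁ hm₂ (emin_le_neg_one hq)
      (by linarith [emax_nonneg q]) using 1
    rw [zpow_neg_one]
    ring
  · convert natCast_div_mul_zpow_mem_Fset (q := q) (k := 2 ^ p) (e := 0) le_rfl
      (by have := Nat.two_pow_pos p; omega) (by linarith [emin_le_neg_one hq]) (emax_nonneg q)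
      using 1
    push_cast
    field_simp

lemma one_add_one_div_two_pow_mem_Fset {p q : ℕ} (hp : 1 ≤ p) (hq : 2 ≤ q) :
    1 + 1 / (2:ℝ) ^ p ∈ Fset p q := by
  have h2p : 2 ≤ 2 ^ p := le_self_pow₀ (by norm_num) (by omega)
  convert natCast_div_mul_zpow_mem_Fset (p := p) (q := q) (k := 2 ^ p + 1) (e := 0) (by omega) (by omega)
    (emin_nonpos hq) (emax_nonneg q) using 1
  push_cast
  field_simp

lemma exists_eq_natCast_div_of_mem_Fset {p q : ℕ} (hq : 2 ≤ q) {x : ℝ} (hx : x ∈ Fset p q)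
    (h₁ : 1 < x) (h₂ : x ≤ 2) : ∃ k : ℕ, 2 ^ p < k ∧ k ≤ 2 * 2 ^ p ∧ x = k / 2 ^ p := by
  have hN : (0:ℝ) < 2 ^ p := by positivity
  obtain ⟨s, i, e, hs, hi, ⟨-, -, hxe⟩ | hxe⟩ := hx
  · have hi' : (i:ℝ) < 2 ^ p := by
      have : i < 2 ^ p := by have := Nat.two_pow_pos p; omega
      exact_mod_cast this
    have hfrac₀ : 0 ≤ (i:ℝ) / 2 ^ p := by positivity
    have hfrac₁ : (i:ℝ) / 2 ^ p < 1 := (div_lt_one hN).mpr hi'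
    have he : (0:ℝ) < 2 ^ e := zpow_pos (by norm_num) e
    obtain rfl : s = 1 := by
      rcases hs with rfl | rfl
      · rfl
      · nlinarith
    rw [one_mul] at hxe
    obtain he' | rfl | rfl | he' : e ≤ -1 ∨ e = 0 ∨ e = 1 ∨ 2 ≤ e := by omega
    · have : (2:ℝ) ^ (e + 1) ≤ 1 := zpow_le_one_of_nonpos₀ (by norm_num) (by omega)
      rw [zpow_add_one₀ (by norm_num)] at this
      nlinarith
    · rw [zpow_zero, mul_one] at hxe
      have : 0 < i := by
        by_contra! h
        obtain rfl : i = 0 := by omega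
        norm_num at hxe
        linarith
      exact ⟨2 ^ p + i, by omega, by omega, by rw [hxe]; push_cast; field_simp⟩
    · rw [zpow_one] at hxe
      obtain rfl : i = 0 := by
        have : (i:ℝ) / 2 ^ p ≤ 0 := by linarith
        have : (i:ℝ) ≤ 0 := by rwa [div_le_iff₀ hN, zero_mul] at this
        exact_mod_cast this.antisymm (Nat.cast_nonneg i)
      exact ⟨2 * 2 ^ p, by have := Nat.two_pow_pos p; omega, le_rfl, by rw [hxe]; push_cast; field_simp; ring⟩
    · have : (2:ℝ) ^ (2:ℤ) ≤ 2 ^ e := zpow_le_zpow_right₀ (by norm_num) he'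
      norm_num at this
      nlinarith
  · have hfrac : (i:ℝ) / 2 ^ p ≤ 1 := by
      rw [div_le_one hN]
      exact_mod_cast hi.trans (Nat.sub_le _ _)
    have hemin : (2:ℝ) ^ emin q ≤ 1 := zpow_le_one_of_nonpos₀ (by norm_num) (emin_nonpos hq)
    have : 0 ≤ (i:ℝ) / 2 ^ p := by positivity
    have : (0:ℝ) < 2 ^ emin q := zpow_pos (by norm_num) _
    rcases hs with rfl | rfl <;> nlinarith

lemma eq_one_add_one_div_two_pow_of_abs_sub_lt {p q : ℕ} (hp : 1 ≤ p) (hq : 2 ≤ q) {g : ℝ} (hg : g ∈ Fset p q)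
    (h : |g - (1 + 1 / 2 ^ p)| < 1 / 2 ^ p) : g = 1 + 1 / 2 ^ p := by
  have hN : (2:ℝ) ≤ 2 ^ p := le_self_pow₀ (by norm_num) (by omega)
  obtain ⟨hhi, hlo⟩ := abs_sub_lt_iff.mp h
  have h₁ : 1 < g := by linarith
  have h₂ : g ≤ 2 := by
    have : 1 / (2:ℝ) ^ p ≤ 1 / 2 := one_div_le_one_div_of_le (by norm_num) hN
    linarith
  obtain ⟨k, hk, -, rfl⟩ := exists_eq_natCast_div_of_mem_Fset hq hg h₁ h₂
  have hk' : (k : ℝ) < 2 ^ p + 2 := by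
    have : (k : ℝ) / 2 ^ p < (2 ^ p + 2) / 2 ^ p := by
      have : (2:ℝ) / 2 ^ p = 2 * (1 / 2 ^ p) := by ring
      rw [add_div, div_self (by positivity)]
      linarith
    exact (div_lt_div_iff_of_pos_right (by positivity)).mp this
  obtain rfl : k = 2 ^ p + 1 := by
    have : k < 2 ^ p + 2 := by exact_mod_cast hk'
    omega
  push_cast
  field_simp

lemma RoundNE.eq_of_abs_sub_lt {p q : ℕ} {rnd : ℝ → ℝ} (h : RoundNE p q rnd) {f z δ : ℝ}
    (hf : f ∈ Fset p q) (hiso : ∀ g ∈ Fset p q, |g - f| < 2 * δ → g = f) (hz : |z - f| < δ) :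
    rnd z = f := by
  obtain ⟨hmem, hnear, -⟩ := h z
  refine hiso _ hmem ?_
  have := hnear f hf
  calc |rnd z - f| ≤ |rnd z - z| + |z - f| := abs_sub_le _ _ _
    _ < 2 * δ := by rw [abs_sub_comm]; linarith

lemma exists_mul_mem_Ioo {N K : ℕ} (hK₁ : N < K) (hK₂ : K ≤ 2 * N) :
    ∃ m, N < m ∧ m ≤ 2 * N ∧ 2 * N ^ 2 + N < K * m ∧ K * m < 2 * N ^ 2 + 3 * N := by
  obtain ⟨m, hlo, hhi⟩ : ∃ m, 2 * N ^ 2 + N < K * m ∧ K * m < 2 * N ^ 2 + 3 * N := by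
    rcases hK₂.lt_or_eq with hK | rfl
    · have hdiv := Nat.div_add_mod (2 * N ^ 2 + N) K
      have hmod := Nat.mod_lt (2 * N ^ 2 + N) (by omega : 0 < K)
      set d := (2 * N ^ 2 + N) / K
      have hKd : K * (d + 1) = K * d + K := by ring
      exact ⟨d + 1, by omega, by omega⟩
    · -- here the floor choice would hit the right endpoint, but the centre 2N(N+1) is a multiple
      exact ⟨N + 1, by nlinarith, by nlinarith⟩
  refine ⟨m, ?_, ?_, hlo, hhi⟩
  · by_contra! hm
    nlinarith [Nat.mul_le_mul hK₂ hm]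
  · by_contra! hm
    nlinarith [Nat.mul_le_mul hK₁ hm]

lemma abs_div_mul_div_two_mul_sub_lt {N a b : ℝ} (hN : 0 < N) (hlo : 2 * N ^ 2 + N < a * b)
    (hhi : a * b < 2 * N ^ 2 + 3 * N) : |a / N * (b / (2 * N)) - (1 + 1 / N)| < 1 / (2 * N) := by
  have hN2 : 0 < 2 * N ^ 2 := by positivity
  have hnum : |a * b - (2 * N ^ 2 + 2 * N)| < N := abs_sub_lt_iff.mpr ⟨by linarith, by linarith⟩
  have hdiff : a / N * (b / (2 * N)) - (1 + 1 / N) = (a * b - (2 * N ^ 2 + 2 * N)) / (2 * N ^ 2) := by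
    field_simp
  rw [hdiff, abs_div, abs_of_pos hN2, div_lt_div_iff₀ hN2 (by positivity)]
  nlinarith

theorem stmt_0_general (p q : ℕ) (hp : 2 ≤ p) (hq : 4 ≤ q)
    (rnd : ℝ → ℝ) (hrnd : RoundNE p q rnd)
    (x : ℝ) (hx : x ∈ Fset p q) (hx1 : 1 < x) (hx2 : x ≤ 2) :
    ∃ y ∈ Fset p q, 1/2 < y ∧ y ≤ 1 ∧ rnd (x * y) = 1 + (2:ℝ)^(-(p:ℤ)) := by
  have hN : (0:ℝ) < 2 ^ p := by positivity
  obtain ⟨k, hk₁, hk₂, rfl⟩ := exists_eq_natCast_div_of_mem_Fset (by omega) hx hx1 hx2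
  obtain ⟨m, hm₁, hm₂, hlo, hhi⟩ := exists_mul_mem_Ioo hk₁ hk₂
  refine ⟨m / (2 * 2 ^ p), natCast_div_two_mul_mem_Fset (by omega) hm₁.le hm₂, ?_, ?_, ?_⟩
  · have : (2:ℝ) ^ p < m := by exact_mod_cast hm₁
    rw [lt_div_iff₀ (by positivity)]
    linarith
  · exact (div_le_one (by positivity)).mpr (by exact_mod_cast hm₂)
  rw [zpow_neg, zpow_natCast, ← one_div]
  refine hrnd.eq_of_abs_sub_lt (one_add_one_div_two_pow_mem_Fset (by omega) (by omega))
    (fun g hg hgf => eq_one_add_one_div_two_pow_of_abs_sub_lt (by omega) (by omega) hg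
      (by convert hgf using 2; ring))
    (abs_div_mul_div_two_mul_sub_lt hN (by exact_mod_cast hlo) (by exact_mod_cast hhi))

theorem stmt_0 (p q : ℕ) (hp : 2 ≤ p) (hq : 4 ≤ q) (hpq : p ≤ 2^(q-2))
    (rnd : ℝ → ℝ) (hrnd : RoundNE p q rnd)
    (x : ℝ) (hx : x ∈ Fset p q) (hx1 : 1 < x) (hx2 : x ≤ 2) :
    ∃ y ∈ Fset p q, 1/2 < y ∧ y ≤ 1 ∧ rnd (x * y) = 1 + (2:ℝ)^(-(p:ℤ)) :=
  stmt_0_general p q hp hq rnd hrnd x hx hx1 hx2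

end FPPaper
end

section
/- Let x and y be finite floating-point numbers such that x·y > 0, |y| ≥ |x|, and the least significant mantissa bit of y is zero (i.e., the coefficient of 2^{-p} in y's mantissa vanishes). Then there exists a finite floating-point number b with |b| ≤ |y| such that the rounded sum b ⊕ x equals y exactly. -/
/-!
By the symmetry `z ↦ -z` of round-to-nearest-even we may assume `0 < x ≤ y`, and we take
`b = ∘(y - x)`. Choose an exponent `E` such that `y` is an even multiple of `u = 2^(E-p)` and
every float within `u` below `y` is a multiple of `u` (`E = e - 1` if `y = 2^e`, `E = e` for any
other `y` of exponent `e`, `E = emin` in the subnormal range). Then `b + x = y + δ` with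
`|δ| ≤ u/2`, so `∘(y + δ)` is `y` or a neighbouring multiple of `u`; the latter can only win a tie,
which ties-to-even forbids since it is an odd multiple of `u`.
-/

open Real Set

namespace FPPaper

lemma emin_le_emax {q : ℕ} (hq : 2 ≤ q) : emin q ≤ emax q := by
  have : (2:ℤ) ^ 1 ≤ 2 ^ (q - 1) := pow_le_pow_right₀ (by norm_num) (by omega)
  unfold emin emax
  omega

lemma two_zpow_add_natCast (c : ℤ) (a : ℕ) : (2:ℝ) ^ (c + a) = 2 ^ a * 2 ^ c := by
  rw [zpow_add₀ two_ne_zero, zpow_natCast, mul_comm]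

variable {p q : ℕ}

lemma zero_mem_Fset : (0:ℝ) ∈ Fset p q :=
  ⟨1, 0, emin q, Or.inl rfl, Nat.zero_le _, Or.inr (by simp)⟩

lemma neg_mem_Fset {x : ℝ} (hx : x ∈ Fset p q) : -x ∈ Fset p q := by
  obtain ⟨s, i, e, hs, hi, hx⟩ := hx
  refine ⟨-s, i, e, by rcases hs with rfl | rfl <;> norm_num, hi, ?_⟩
  rcases hx with ⟨he1, he2, rfl⟩ | rfl
  · exact Or.inl ⟨he1, he2, by ring⟩
  · exact Or.inr (by ring)

lemma EvenFP.neg {x : ℝ} (hx : EvenFP p q x) : EvenFP p q (-x) := by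
  obtain ⟨s, i, e, hs, hi, hi2, hx⟩ := hx
  refine ⟨-s, i, e, by rcases hs with rfl | rfl <;> norm_num, hi, hi2, ?_⟩
  rcases hx with ⟨he1, he2, rfl⟩ | rfl
  · exact Or.inl ⟨he1, he2, by ring⟩
  · exact Or.inr (by ring)

lemma natCast_mul_mem_Fset_of_lt_two_pow {j : ℕ} (hj : j < 2 ^ p) :
    (j:ℝ) * 2 ^ (emin q - p) ∈ Fset p q :=
  ⟨1, j, emin q, Or.inl rfl, by omega,
    Or.inr (by rw [zpow_sub₀ two_ne_zero, zpow_natCast]; ring)⟩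

lemma natCast_mul_mem_Fset_of_two_pow_le {j : ℕ} {e : ℤ} (he1 : emin q ≤ e) (he2 : e ≤ emax q)
    (hj1 : 2 ^ p ≤ j) (hj2 : j < 2 ^ (p + 1)) : (j:ℝ) * 2 ^ (e - p) ∈ Fset p q := by
  refine ⟨1, j - 2 ^ p, e, Or.inl rfl, by rw [pow_succ] at hj2; omega, Or.inl ⟨he1, he2, ?_⟩⟩
  rw [zpow_sub₀ two_ne_zero, zpow_natCast, Nat.cast_sub hj1]
  push_cast
  field_simp
  ring

lemma natCast_mul_mem_Fset {j : ℕ} {e : ℤ} (he1 : emin q ≤ e) (he2 : e ≤ emax q)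
    (hj : j < 2 ^ (p + 1)) : (j:ℝ) * 2 ^ (e - p) ∈ Fset p q := by
  induction e, he1 using Int.leInduction generalizing j with
  | base =>
    rcases lt_or_ge j (2 ^ p) with h | h
    · exact natCast_mul_mem_Fset_of_lt_two_pow h
    · exact natCast_mul_mem_Fset_of_two_pow_le le_rfl he2 h hj
  | succ e he ih =>
    rcases lt_or_ge j (2 ^ p) with h | h
    · have hdouble : (j:ℝ) * 2 ^ (e + 1 - p) = ((2 * j : ℕ) : ℝ) * 2 ^ (e - p) := by
        rw [show e + 1 - p = (e - p) + (1 : ℕ) by push_cast; ring, two_zpow_add_natCast]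
        push_cast
        ring
      rw [hdouble]
      exact ih (by omega) (by rw [pow_succ]; omega)
    · exact natCast_mul_mem_Fset_of_two_pow_le (by omega) he2 h hj

/-- `n` is the integral significand: `|n| = 2^p + i` for a normal float, `|n| = i` for a subnormal
one. -/
lemma exists_repr_of_mantissa {x s : ℝ} {i : ℕ} {e : ℤ} (hs : s = 1 ∨ s = -1)
    (hi : i ≤ 2 ^ p - 1)
    (hx : (emin q ≤ e ∧ e ≤ emax q ∧ x = s * (1 + (i:ℝ) / 2 ^ p) * 2 ^ e) ∨
      x = s * ((i:ℝ) / 2 ^ p) * 2 ^ (emin q)) :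
    ∃ (n : ℤ) (e' : ℤ), emin q ≤ e' ∧ n.natAbs < 2 ^ (p + 1) ∧ n.natAbs % 2 ^ p = i ∧
      (2 ^ p ≤ n.natAbs ∧ e' ≤ emax q ∨ e' = emin q) ∧ x = n * 2 ^ (e' - p) := by
  have hi' : i < 2 ^ p := by have := Nat.one_le_two_pow (n := p); omega
  obtain ⟨N, e', he', hN, hNi, hnorm, rfl⟩ : ∃ (N : ℕ) (e' : ℤ), emin q ≤ e' ∧ N < 2 ^ (p + 1) ∧
      N % 2 ^ p = i ∧ (2 ^ p ≤ N ∧ e' ≤ emax q ∨ e' = emin q) ∧ x = s * N * 2 ^ (e' - p) := by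
    rcases hx with ⟨he1, he2, rfl⟩ | rfl
    · refine ⟨2 ^ p + i, e, he1, by rw [pow_succ]; omega, by simp [Nat.mod_eq_of_lt hi'],
        Or.inl ⟨by omega, he2⟩, ?_⟩
      rw [zpow_sub₀ two_ne_zero, zpow_natCast]
      push_cast
      field_simp
    · refine ⟨i, emin q, le_rfl, by rw [pow_succ]; omega, Nat.mod_eq_of_lt hi', Or.inr rfl, ?_⟩
      rw [zpow_sub₀ two_ne_zero, zpow_natCast]
      ring
  rcases hs with rfl | rfl
  · exact ⟨N, e', he', hN, hNi, hnorm, by push_cast; ring⟩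
  · exact ⟨-N, e', he', by simpa using hN, by simpa using hNi, by simpa using hnorm,
      by push_cast; ring⟩

lemma exists_repr_of_mem_Fset {x : ℝ} (hx : x ∈ Fset p q) :
    ∃ (n : ℤ) (e : ℤ), emin q ≤ e ∧ n.natAbs < 2 ^ (p + 1) ∧
      (2 ^ p ≤ n.natAbs ∧ e ≤ emax q ∨ e = emin q) ∧ x = n * 2 ^ (e - p) := by
  obtain ⟨s, i, e, hs, hi, hx⟩ := hx
  obtain ⟨n, e', he', hn, -, hnorm, rfl⟩ := exists_repr_of_mantissa hs hi hx
  exact ⟨n, e', he', hn, hnorm, rfl⟩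

lemma EvenFP.exists_repr (hp : 1 ≤ p) {x : ℝ} (hx : EvenFP p q x) :
    ∃ (n : ℤ) (e : ℤ), emin q ≤ e ∧ n.natAbs < 2 ^ (p + 1) ∧ Even n ∧ x = n * 2 ^ (e - p) := by
  obtain ⟨s, i, e, hs, hi, hi2, hx⟩ := hx
  obtain ⟨n, e', he', hn, hni, -, rfl⟩ := exists_repr_of_mantissa hs hi hx
  have h2n : 2 ∣ n.natAbs := (Nat.dvd_mod_iff (dvd_pow_self 2 (by omega))).1 (hni ▸ hi2)
  exact ⟨n, e', he', hn, Int.natAbs_even.1 (even_iff_two_dvd.2 h2n), rfl⟩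

lemma le_of_two_zpow_le_abs {x : ℝ} {n e E : ℤ} (he : emin q ≤ e) (hn : n.natAbs < 2 ^ (p + 1))
    (hx : x = n * 2 ^ (e - p)) (hE : E = emin q ∨ (2:ℝ) ^ E ≤ |x|) : E ≤ e := by
  rcases hE with rfl | hE
  · exact he
  have hn' : |(n:ℝ)| < 2 ^ (p + 1) := by
    rw [← Int.cast_abs, ← Nat.cast_natAbs]
    exact_mod_cast hn
  have hlt : |x| < 2 ^ (e + 1) := by
    rw [hx, abs_mul, abs_of_pos (zpow_pos (two_pos (α := ℝ)) (e - p)),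
      show e + 1 = (e - p) + ((p + 1 : ℕ) : ℤ) by push_cast; ring, two_zpow_add_natCast]
    exact mul_lt_mul_of_pos_right hn' (zpow_pos two_pos _)
  have := (zpow_lt_zpow_iff_right₀ one_lt_two).1 (hE.trans_lt hlt)
  omega

lemma intCast_mul_two_zpow_of_le (n : ℤ) {e E : ℤ} (c : ℤ) (h : E ≤ e) :
    (n:ℝ) * 2 ^ (e - c) = ((n * 2 ^ (e - E).toNat : ℤ) : ℝ) * 2 ^ (E - c) := by
  push_cast
  rw [mul_assoc, ← two_zpow_add_natCast]
  congr 2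
  omega

lemma exists_int_mul_of_mem_Fset {x : ℝ} {E : ℤ} (hx : x ∈ Fset p q)
    (hE : E = emin q ∨ (2:ℝ) ^ E ≤ |x|) : ∃ k : ℤ, x = k * 2 ^ (E - p) := by
  obtain ⟨n, e, he, hn, -, rfl⟩ := exists_repr_of_mem_Fset hx
  exact ⟨_, intCast_mul_two_zpow_of_le n p (le_of_two_zpow_le_abs he hn rfl hE)⟩

lemma EvenFP.exists_even_int_mul (hp : 1 ≤ p) {x : ℝ} {E : ℤ} (hx : EvenFP p q x)
    (hE : E = emin q ∨ (2:ℝ) ^ E ≤ |x|) : ∃ k : ℤ, Even k ∧ x = k * 2 ^ (E - p) := by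
  obtain ⟨n, e, he, hn, hev, rfl⟩ := hx.exists_repr hp
  exact ⟨_, hev.mul_right _, intCast_mul_two_zpow_of_le n p (le_of_two_zpow_le_abs he hn rfl hE)⟩

lemma natCast_mul_mem_Fset_of_le {y : ℝ} {E : ℤ} {j : ℕ} (hE1 : emin q ≤ E) (hE2 : E ≤ emax q)
    (hy : y ∈ Fset p q) (hy2 : y ≤ 2 ^ (E + 1)) (hj : (j:ℝ) * 2 ^ (E - p) ≤ y) :
    (j:ℝ) * 2 ^ (E - p) ∈ Fset p q := by
  rcases lt_or_ge j (2 ^ (p + 1)) with h | h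
  · exact natCast_mul_mem_Fset hE1 hE2 h
  · have htop : (2:ℝ) ^ (E + 1) ≤ j * 2 ^ (E - p) := by
      rw [show E + 1 = (E - p) + ((p + 1 : ℕ) : ℤ) by push_cast; ring, two_zpow_add_natCast]
      exact mul_le_mul_of_nonneg_right (by exact_mod_cast h) (zpow_pos two_pos _).le
    rwa [le_antisymm hj (hy2.trans htop)]

lemma exists_exp_window (hq : 2 ≤ q) {y : ℝ} (hy : y ∈ Fset p q) (hy0 : 0 < y) :
    ∃ E : ℤ, emin q ≤ E ∧ E ≤ emax q ∧ y ≤ 2 ^ (E + 1) ∧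
      (E = emin q ∨ (2:ℝ) ^ E + 2 ^ (E - p) ≤ y) := by
  rcases le_or_gt y (2 ^ emin q) with hsmall | hbig
  · exact ⟨emin q, le_rfl, emin_le_emax hq,
      hsmall.trans (zpow_le_zpow_right₀ one_le_two (by omega)), Or.inl rfl⟩
  obtain ⟨n, e, he, hn, hnorm, rfl⟩ := exists_repr_of_mem_Fset hy
  set G : ℝ := 2 ^ (e - p) with hG_def
  have hG : 0 < G := zpow_pos two_pos _
  have h2e : (2:ℝ) ^ e = 2 ^ p * G := by rw [← two_zpow_add_natCast, sub_add_cancel]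
  have h2e1 : (2:ℝ) ^ (e + 1) = 2 ^ (p + 1) * G := by
    rw [← two_zpow_add_natCast]; push_cast; ring_nf
  lift n to ℕ using (by exact_mod_cast (pos_of_mul_pos_left hy0 hG.le).le)
  simp only [Int.natAbs_natCast, Int.cast_natCast] at hn hnorm hbig h2e h2e1 hy0 ⊢
  have hnp : 2 ^ p ≤ n ∧ e ≤ emax q := by
    rcases hnorm with h | rfl
    · exact h
    refine ⟨?_, emin_le_emax hq⟩
    rw [h2e] at hbig
    exact_mod_cast (lt_of_mul_lt_mul_right hbig hG.le).le
  rcases hnp.1.eq_or_lt with hn2 | hn2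
  · -- `y = 2 ^ e` sits at the bottom of its binade, so the spacing below it is halved
    subst hn2
    push_cast at hbig ⊢
    rw [← h2e] at hbig ⊢
    have hee : emin q < e := (zpow_lt_zpow_iff_right₀ one_lt_two).1 hbig
    refine ⟨e - 1, by omega, by omega, by rw [sub_add_cancel], Or.inr ?_⟩
    have : (2:ℝ) ^ (e - 1 - p) ≤ 2 ^ (e - 1) := zpow_le_zpow_right₀ one_le_two (by omega)
    have h2 : (2:ℝ) ^ e = 2 * 2 ^ (e - 1) := by
      rw [← zpow_one_add₀ two_ne_zero]; ring_nf
    linarith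
  · refine ⟨e, he, hnp.2, ?_, Or.inr ?_⟩
    · rw [h2e1]
      exact mul_le_mul_of_nonneg_right (by exact_mod_cast hn.le) hG.le
    · rw [h2e, ← hG_def, ← add_one_mul]
      exact mul_le_mul_of_nonneg_right (by exact_mod_cast hn2) hG.le

namespace RoundNE

variable {rnd : ℝ → ℝ}

lemma neg (hrnd : RoundNE p q rnd) : RoundNE p q (fun z => -rnd (-z)) := by
  intro x
  obtain ⟨hmem, hmin, htie⟩ := hrnd (-x)
  have hdist : ∀ y, |x - y| = |-x - -y| := fun y => by rw [← abs_neg]; ring_nf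
  refine ⟨neg_mem_Fset hmem, fun y hy => ?_, fun y hy hne heq => ?_⟩
  · rw [hdist, hdist, neg_neg]
    exact hmin (-y) (neg_mem_Fset hy)
  · rw [hdist, hdist, neg_neg] at heq
    exact (htie (-y) (neg_mem_Fset hy) (fun h => hne (by simp [← h])) heq).neg

lemma apply_le_of_le (hrnd : RoundNE p q rnd) {t y : ℝ} (hy : y ∈ Fset p q) (h : t ≤ y) :
    rnd t ≤ y := by
  by_contra! hlt
  have := (hrnd t).2.1 y hy
  rw [abs_of_nonpos (by linarith), abs_of_nonpos (by linarith)] at this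
  linarith

lemma le_apply_of_le (hrnd : RoundNE p q rnd) {t y : ℝ} (hy : y ∈ Fset p q) (h : y ≤ t) :
    y ≤ rnd t := by
  by_contra! hlt
  have := (hrnd t).2.1 y hy
  rw [abs_of_nonneg (by linarith), abs_of_nonneg (by linarith)] at this
  linarith

lemma abs_sub_le_half (hrnd : RoundNE p q rnd) {a G t : ℝ} (ha : a ∈ Fset p q)
    (haG : a + G ∈ Fset p q) (h1 : a ≤ t) (h2 : t ≤ a + G) : |rnd t - t| ≤ G / 2 := by
  have hlo := (hrnd t).2.1 a ha
  have hhi := (hrnd t).2.1 (a + G) haG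
  rw [abs_of_nonneg (sub_nonneg.2 h1)] at hlo
  rw [abs_of_nonpos (by linarith : t - (a + G) ≤ 0)] at hhi
  rw [abs_sub_comm]
  linarith

lemma abs_sub_le_half_ulp (hrnd : RoundNE p q rnd) {t y : ℝ} {E : ℤ}
    (hE1 : emin q ≤ E) (hE2 : E ≤ emax q) (hy : y ∈ Fset p q)
    (hyE : E = emin q ∨ (2:ℝ) ^ E ≤ y) (hy2 : y ≤ 2 ^ (E + 1)) (ht0 : 0 ≤ t) (hty : t < y) :
    |rnd t - t| ≤ 2 ^ (E - p) / 2 := by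
  set G : ℝ := 2 ^ (E - p)
  have hG : 0 < G := zpow_pos two_pos _
  obtain ⟨K, hK⟩ := exists_int_mul_of_mem_Fset hy (E := E)
    (by rwa [abs_of_pos (ht0.trans_lt hty)])
  set j := ⌊t / G⌋₊
  have hjt : (j:ℝ) * G ≤ t := (le_div_iff₀ hG).1 (Nat.floor_le (div_nonneg ht0 hG.le))
  have htj : t < (j + 1 : ℝ) * G := (div_lt_iff₀ hG).1 (Nat.lt_floor_add_one _)
  have hjK : ((j + 1 : ℕ) : ℝ) * G ≤ y := by
    have hjK : (j : ℤ) < K := by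
      have : (j:ℝ) * G < K * G := hK ▸ hjt.trans_lt hty
      exact_mod_cast lt_of_mul_lt_mul_right this hG.le
    rw [hK]
    exact mul_le_mul_of_nonneg_right (by exact_mod_cast hjK) hG.le
  have hlo := natCast_mul_mem_Fset_of_le hE1 hE2 hy hy2 (hjt.trans hty.le)
  have hhi := natCast_mul_mem_Fset_of_le hE1 hE2 hy hy2 hjK
  push_cast at hhi
  exact hrnd.abs_sub_le_half hlo (by rwa [add_one_mul] at hhi) hjt (by linarith)

lemma apply_add_eq_of_grid (hrnd : RoundNE p q rnd) {y δ G : ℝ} (hy : y ∈ Fset p q)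
    (hG : 0 < G) (hδ : |δ| ≤ G / 2) (hyG : ∃ k : ℤ, Even k ∧ y = k * G)
    (hgrid : ∀ f ∈ Fset p q, |f - (y + δ)| ≤ |δ| → ∃ k : ℤ, f = k * G)
    (hgrid_even : ∀ f, EvenFP p q f → |f - (y + δ)| ≤ |δ| → ∃ k : ℤ, Even k ∧ f = k * G) :
    rnd (y + δ) = y := by
  obtain ⟨hrF, hmin, htie⟩ := hrnd (y + δ)
  set r := rnd (y + δ)
  have hr : |r - (y + δ)| ≤ |δ| := by simpa [abs_sub_comm] using hmin y hy
  obtain ⟨k, hk, rfl⟩ := hyG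
  obtain ⟨k', hk'⟩ := hgrid r hrF hr
  have hdist : |r - k * G| = |((k' - k : ℤ) : ℝ)| * G := by
    rw [hk', ← sub_mul, abs_mul, abs_of_pos hG]
    push_cast
    ring
  have htri : |r - k * G| ≤ |r - (k * G + δ)| + |δ| := by
    simpa using abs_sub_le r (k * G + δ) (k * G)
  by_contra hne
  have hkk : k' - k ≠ 0 := fun h => hne (by rw [hk', sub_eq_zero.1 h])
  have hone : (1:ℝ) ≤ |((k' - k : ℤ) : ℝ)| := by
    rw [← Int.cast_abs]
    exact_mod_cast Int.one_le_abs hkk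
  -- `r` is a grid neighbour of `y`, so `y + δ` is a tie and `r` must be even
  have hrδ : |r - (k * G + δ)| = |δ| := by nlinarith
  have hev := htie (k * G) hy (Ne.symm hne) (by rw [add_sub_cancel_left, abs_sub_comm, hrδ])
  obtain ⟨k'', hk''_even, hk''⟩ := hgrid_even r hev hr
  have hk'k'' : k'' = k' := by
    have : (k'':ℝ) = k' := mul_right_cancel₀ hG.ne' (hk''.symm.trans hk')
    exact_mod_cast this
  obtain ⟨m, hm⟩ := (hk'k'' ▸ hk''_even).sub hk
  have htwo : (2:ℝ) ≤ |((k' - k : ℤ) : ℝ)| := by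
    rw [← Int.cast_abs]
    exact_mod_cast (show (2:ℤ) ≤ |k' - k| by rw [hm]; rcases abs_cases (m + m) with h | h <;> omega)
  nlinarith

lemma apply_add_eq (hp : 1 ≤ p) (hrnd : RoundNE p q rnd) {y δ : ℝ} {E : ℤ}
    (hy : y ∈ Fset p q) (hyev : EvenFP p q y) (hyE : E = emin q ∨ (2:ℝ) ^ E + 2 ^ (E - p) ≤ y)
    (hδ : |δ| ≤ 2 ^ (E - p) / 2) : rnd (y + δ) = y := by
  have hnear : ∀ f, |f - (y + δ)| ≤ |δ| → E = emin q ∨ (2:ℝ) ^ E ≤ |f| := fun f hf =>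
    hyE.imp_right fun h => by linarith [le_abs_self f, neg_abs_le (f - (y + δ)), neg_abs_le δ]
  exact hrnd.apply_add_eq_of_grid hy (zpow_pos two_pos _) hδ
    (hyev.exists_even_int_mul hp (hnear y (by rw [sub_add_cancel_left, abs_neg])))
    (fun f hf hfδ => exists_int_mul_of_mem_Fset hf (hnear f hfδ))
    (fun f hf hfδ => hf.exists_even_int_mul hp (hnear f hfδ))

end RoundNE

lemma exists_rnd_add_eq_of_pos (hp : 1 ≤ p) (hq : 2 ≤ q) {rnd : ℝ → ℝ} (hrnd : RoundNE p q rnd)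
    {x y : ℝ} (hy : y ∈ Fset p q) (hyev : EvenFP p q y) (hx : 0 < x) (hxy : x ≤ y) :
    ∃ b ∈ Fset p q, |b| ≤ |y| ∧ rnd (b + x) = y := by
  obtain ⟨E, hE1, hE2, hy2, hyE⟩ := exists_exp_window hq hy (hx.trans_le hxy)
  have hb0 : 0 ≤ rnd (y - x) := hrnd.le_apply_of_le zero_mem_Fset (by linarith)
  have hby : rnd (y - x) ≤ y := hrnd.apply_le_of_le hy (by linarith)
  refine ⟨rnd (y - x), (hrnd _).1, by rwa [abs_of_nonneg hb0, abs_of_nonneg (hb0.trans hby)], ?_⟩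
  have hδ := hrnd.abs_sub_le_half_ulp (t := y - x) hE1 hE2 hy
    (hyE.imp_right fun h => by linarith [zpow_pos (two_pos (α := ℝ)) (E - p)]) hy2
    (by linarith) (by linarith)
  rw [show rnd (y - x) + x = y + (rnd (y - x) - (y - x)) by ring]
  exact hrnd.apply_add_eq hp hy hyev hyE hδ

theorem stmt_3_general (p q : ℕ) (hp : 2 ≤ p) (hq : 4 ≤ q)
    (rnd : ℝ → ℝ) (hrnd : RoundNE p q rnd)
    (x y : ℝ) (hy : y ∈ Fset p q)
    (hxy : 0 < x * y) (hyx : |x| ≤ |y|) (heven : EvenFP p q y) :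
    ∃ b ∈ Fset p q, |b| ≤ |y| ∧ rnd (b + x) = y := by
  rcases lt_or_gt_of_ne (left_ne_zero_of_mul hxy.ne') with hx | hx
  · have hy0 : y < 0 := neg_of_mul_pos_right hxy hx.le
    rw [abs_of_neg hx, abs_of_neg hy0] at hyx
    obtain ⟨b, hb, hby, hbx⟩ := exists_rnd_add_eq_of_pos (by omega) (by omega) hrnd.neg
      (neg_mem_Fset hy) heven.neg (neg_pos.2 hx) (by linarith)
    refine ⟨-b, neg_mem_Fset hb, by rwa [abs_neg, ← abs_neg y], ?_⟩
    rw [← neg_neg y, ← hbx, neg_neg, neg_add, neg_neg]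
  · have hy0 : 0 < y := pos_of_mul_pos_right hxy hx.le
    rw [abs_of_pos hx, abs_of_pos hy0] at hyx
    exact exists_rnd_add_eq_of_pos (by omega) (by omega) hrnd hy heven hx hyx

theorem stmt_3 (p q : ℕ) (hp : 2 ≤ p) (hq : 4 ≤ q) (hpq : p ≤ 2^(q-2))
    (rnd : ℝ → ℝ) (hrnd : RoundNE p q rnd)
    (x y : ℝ) (hx : x ∈ Fset p q) (hy : y ∈ Fset p q)
    (hxy : 0 < x * y) (hyx : |x| ≤ |y|) (heven : EvenFP p q y) :
    ∃ b ∈ Fset p q, |b| ≤ |y| ∧ rnd (b + x) = y :=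
  stmt_3_general p q hp hq rnd hrnd x y hy hxy hyx heven

end FPPaper
end

section
/- Let x be a finite floating-point number and let e be a positive integer such that 2^{-e} is a finite float. If m = ⌈(2^q + p)/e⌉, then multiplying x by 2^{-e} a total of m times (with rounding after each multiplication) yields exactly 0. -/
open Real Set

namespace FPPaper

/-! Rounding a number of magnitude at most `2 ^ k`, with `k ≤ emax`, keeps it below `2 ^ k`:
if `2 ^ k` is a float, rounding cannot cross `±2 ^ k`; otherwise `2 ^ k ≤ ω / 2`, and such a
number rounds to `0`, the tie at `ω / 2` going to the even neighbour `0`. Hence `m` rounded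
multiplications by `2 ^ (-e)` take a float, of magnitude at most `2 ^ (emax + 1)`, to a float of
magnitude at most `2 ^ (emax + 1 - e m) < ω`, which can only be `0`. -/

lemma emin_le_emax_add_one (q : ℕ) : emin q ≤ emax q + 1 := by
  have : (1:ℤ) ≤ 2 ^ (q - 1) := one_le_pow₀ one_le_two
  simp only [emin, emax]
  omega

lemma emax_add_one_sub_emin_lt (q : ℕ) : emax q + 1 - emin q < 2 ^ q := by
  rcases q with _ | q
  · simp [emin, emax]
  · simp only [emin, emax, Nat.add_sub_cancel, pow_succ]
    omega

/-- The smallest positive float `ω`. -/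
noncomputable def minSubnormal (p q : ℕ) : ℝ := 2 ^ (emin q - p)

section Floats

variable {p q : ℕ}

lemma minSubnormal_pos : 0 < minSubnormal p q := by
  unfold minSubnormal
  positivity

lemma minSubnormal_lt (hp : 1 ≤ p) : minSubnormal p q < 2 ^ emin q :=
  zpow_lt_zpow_right₀ one_lt_two (by omega)

lemma zpow_two_mem_Fset {k : ℤ} (h1 : emin q - p ≤ k) (h2 : k ≤ emax q) :
    (2:ℝ) ^ k ∈ Fset p q := by
  by_cases hk : emin q ≤ k
  · exact ⟨1, 0, k, Or.inl rfl, Nat.zero_le _, Or.inl ⟨hk, h2, by simp⟩⟩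
  obtain ⟨j, hj⟩ : ∃ j : ℕ, (j : ℤ) = k - emin q + p := ⟨_, Int.toNat_of_nonneg (by omega)⟩
  refine ⟨1, 2 ^ j, emin q, Or.inl rfl,
    Nat.le_sub_one_of_lt (Nat.pow_lt_pow_right one_lt_two (by omega)), Or.inr ?_⟩
  push_cast
  rw [← zpow_natCast, ← zpow_natCast, one_mul, ← zpow_sub₀ two_ne_zero, ← zpow_add₀ two_ne_zero,
    hj]
  ring_nf

lemma abs_le_of_mem_Fset {x : ℝ} (hx : x ∈ Fset p q) : |x| ≤ 2 ^ (emax q + 1) := by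
  obtain ⟨s, i, e, hs, hi, hc⟩ := hx
  have hs1 : |s| = 1 := by rcases hs with rfl | rfl <;> simp
  have hmant : (i : ℝ) / 2 ^ p ≤ 1 := by
    rw [div_le_one (by positivity)]
    exact_mod_cast hi.trans (Nat.sub_le _ _)
  rcases hc with ⟨-, he, rfl⟩ | rfl
  · calc |s * (1 + (i : ℝ) / 2 ^ p) * 2 ^ e| = (1 + (i : ℝ) / 2 ^ p) * 2 ^ e := by
          rw [abs_mul, abs_mul, hs1, one_mul, abs_of_nonneg (by positivity),
            abs_of_nonneg (by positivity)]
      _ ≤ 2 * 2 ^ emax q := by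
          gcongr
          · linarith
          · exact one_le_two
      _ = 2 ^ (emax q + 1) := by rw [zpow_add_one₀ two_ne_zero, mul_comm]
  · calc |s * ((i : ℝ) / 2 ^ p) * 2 ^ emin q| = (i : ℝ) / 2 ^ p * 2 ^ emin q := by
          rw [abs_mul, abs_mul, hs1, one_mul, abs_of_nonneg (by positivity),
            abs_of_nonneg (by positivity)]
      _ ≤ 1 * 2 ^ emin q := by gcongr
      _ ≤ 2 ^ (emax q + 1) := by
          rw [one_mul]
          exact zpow_le_zpow_right₀ one_le_two (emin_le_emax_add_one q)

/-- Stated for a raw representation, as `Fset` and `EvenFP` share its shape. -/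
lemma abs_normal_or_subnormal {s z : ℝ} {i : ℕ} {e : ℤ} (hs : s = 1 ∨ s = -1)
    (hz : (emin q ≤ e ∧ e ≤ emax q ∧ z = s * (1 + (i : ℝ) / 2 ^ p) * (2:ℝ) ^ e) ∨
      z = s * ((i : ℝ) / 2 ^ p) * (2:ℝ) ^ emin q) :
    2 ^ emin q ≤ |z| ∨ |z| = i * minSubnormal p q := by
  have hs1 : |s| = 1 := by rcases hs with rfl | rfl <;> simp
  rcases hz with ⟨he, -, rfl⟩ | rfl
  · left
    rw [abs_mul, abs_mul, hs1, one_mul, abs_of_nonneg (by positivity),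
      abs_of_nonneg (by positivity)]
    calc (2:ℝ) ^ emin q ≤ 2 ^ e := zpow_le_zpow_right₀ one_le_two he
      _ ≤ (1 + (i : ℝ) / 2 ^ p) * 2 ^ e := le_mul_of_one_le_left (by positivity)
          (le_add_of_nonneg_right (by positivity))
  · right
    rw [abs_mul, abs_mul, hs1, one_mul, abs_of_nonneg (by positivity),
      abs_of_nonneg (by positivity), minSubnormal, zpow_sub₀ two_ne_zero, zpow_natCast]
    ring

lemma minSubnormal_le_abs_of_mem (hp : 1 ≤ p) {z : ℝ} (hz : z ∈ Fset p q) (hz0 : z ≠ 0) :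
    minSubnormal p q ≤ |z| := by
  obtain ⟨s, i, e, hs, -, hc⟩ := hz
  rcases abs_normal_or_subnormal hs hc with h | h
  · exact (minSubnormal_lt hp).le.trans h
  · have hi : i ≠ 0 := by
      rintro rfl
      simp [hz0] at h
    rw [h]
    exact le_mul_of_one_le_left minSubnormal_pos.le
      (by exact_mod_cast Nat.one_le_iff_ne_zero.mpr hi)

lemma EvenFP.abs_ne_minSubnormal (hp : 1 ≤ p) {z : ℝ} (hz : EvenFP p q z) :
    |z| ≠ minSubnormal p q := by
  obtain ⟨s, i, e, hs, -, ⟨j, rfl⟩, hc⟩ := hz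
  rcases abs_normal_or_subnormal hs hc with h | h
  · exact (lt_of_lt_of_le (minSubnormal_lt hp) h).ne'
  · rw [h]
    intro heq
    have : 2 * j = 1 := by
      exact_mod_cast (by simpa [minSubnormal_pos.ne'] using heq : ((2 * j : ℕ) : ℝ) = 1)
    omega

end Floats

namespace RoundNE

variable {p q : ℕ} {rnd : ℝ → ℝ}

lemma abs_le_of_abs_le (hrnd : RoundNE p q rnd) {b y : ℝ} (hb : b ∈ Fset p q)
    (hy : |y| ≤ b) : |rnd y| ≤ b := by
  have hup := (hrnd y).2.1 b hb
  have hlow := (hrnd y).2.1 (-b) (neg_mem_Fset hb)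
  rw [abs_le] at hy ⊢
  rw [abs_sub_comm y b, abs_of_nonneg (a := b - y) (by linarith)] at hup
  rw [sub_neg_eq_add, abs_of_nonneg (a := y + b) (by linarith)] at hlow
  constructor <;> linarith [le_abs_self (y - rnd y), neg_abs_le (y - rnd y)]

/-- Anything of magnitude at most `ω / 2` rounds to `0`: the only competitor is `±ω`, which is at
least as far away, and wins no tie since its mantissa integer is odd. -/
lemma eq_zero_of_abs_le_half_minSubnormal (hrnd : RoundNE p q rnd) (hp : 1 ≤ p) {y : ℝ}
    (hy : |y| ≤ minSubnormal p q / 2) : rnd y = 0 := by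
  obtain ⟨hmem, hnear, htie⟩ := hrnd y
  by_contra hne
  have hω := minSubnormal_le_abs_of_mem hp hmem hne
  have hdist : |y - rnd y| ≤ |y| := by simpa using hnear 0 zero_mem_Fset
  have htri : |rnd y| ≤ |y| + |y - rnd y| := by
    simpa using abs_sub y (y - rnd y)
  have heven := htie 0 zero_mem_Fset (Ne.symm hne) (by rw [sub_zero]; linarith)
  exact heven.abs_ne_minSubnormal hp (by linarith)

lemma abs_le_zpow_two (hrnd : RoundNE p q rnd) (hp : 1 ≤ p) {k : ℤ} (hk : k ≤ emax q) {y : ℝ}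
    (hy : |y| ≤ 2 ^ k) : |rnd y| ≤ 2 ^ k := by
  by_cases hk' : emin q - p ≤ k
  · exact hrnd.abs_le_of_abs_le (zpow_two_mem_Fset hk' hk) hy
  · have hsmall : |y| ≤ minSubnormal p q / 2 := by
      calc |y| ≤ 2 ^ k := hy
        _ ≤ 2 ^ (emin q - p - 1) := zpow_le_zpow_right₀ one_le_two (by omega)
        _ = minSubnormal p q / 2 := by
          rw [zpow_sub_one₀ two_ne_zero, minSubnormal, div_eq_mul_inv]
    rw [hrnd.eq_zero_of_abs_le_half_minSubnormal hp hsmall, abs_zero]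
    positivity

lemma abs_iterMul_le (hrnd : RoundNE p q rnd) (hp : 1 ≤ p) {e : ℕ} {k : ℤ} (hk : k ≤ emax q + e)
    {x : ℝ} (hx : |x| ≤ 2 ^ k) (n : ℕ) :
    |iterMul rnd ((2:ℝ) ^ (-(e:ℤ))) x n| ≤ 2 ^ (k - e * n) := by
  induction n with
  | zero => simpa [iterMul] using hx
  | succ n ih =>
    have hen : (e : ℤ) ≤ e * (n + 1 : ℕ) := le_mul_of_one_le_right (by positivity) (by omega)
    refine hrnd.abs_le_zpow_two hp (by omega) ?_
    calc |iterMul rnd ((2:ℝ) ^ (-(e:ℤ))) x n * 2 ^ (-(e:ℤ))|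
        = |iterMul rnd ((2:ℝ) ^ (-(e:ℤ))) x n| * 2 ^ (-(e:ℤ)) := by
          rw [abs_mul, abs_of_pos (a := (2:ℝ) ^ (-(e:ℤ))) (by positivity)]
      _ ≤ 2 ^ (k - e * n) * 2 ^ (-(e:ℤ)) := by gcongr
      _ = 2 ^ (k - e * (n + 1 : ℕ)) := by
          rw [← zpow_add₀ two_ne_zero]
          push_cast
          ring_nf

end RoundNE

theorem stmt_6_general (p q : ℕ) (hp : 2 ≤ p)
    (rnd : ℝ → ℝ) (hrnd : RoundNE p q rnd)
    (x : ℝ) (hx : x ∈ Fset p q)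
    (e : ℕ) (he : 1 ≤ e)
    (m : ℕ) (hm : (m : ℤ) = ⌈((2^q + p : ℚ)) / (e : ℚ)⌉) :
    iterMul rnd ((2:ℝ)^(-(e:ℤ))) x m = 0 := by
  have hem : (2:ℤ) ^ q + p ≤ e * m := by
    have h := Int.le_ceil ((2 ^ q + p : ℚ) / e)
    rw [← hm, div_le_iff₀ (by exact_mod_cast he)] at h
    push_cast at h
    exact_mod_cast (by linarith : (2 ^ q + p : ℚ) ≤ e * m)
  obtain ⟨n, rfl⟩ : ∃ n, m = n + 1 := Nat.exists_eq_add_one.mpr <| Nat.pos_of_ne_zero <| by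
    rintro rfl
    have : (0:ℤ) < 2 ^ q + p := by positivity
    simp only [Nat.cast_zero, mul_zero] at hem
    linarith
  by_contra hne
  have hlow := minSubnormal_le_abs_of_mem (by omega) (hrnd _).1 hne
  have hup := hrnd.abs_iterMul_le (e := e) (k := emax q + 1) (by omega) (by omega)
    (abs_le_of_mem_Fset hx) (n + 1)
  have hexp : emax q + 1 - e * (n + 1 : ℕ) < emin q - p := by
    linarith [emax_add_one_sub_emin_lt q]
  exact (hlow.trans hup).not_gt (zpow_lt_zpow_right₀ one_lt_two hexp)

theorem stmt_6 (p q : ℕ) (hp : 2 ≤ p) (hq : 4 ≤ q) (hpq : p ≤ 2^(q-2))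
    (rnd : ℝ → ℝ) (hrnd : RoundNE p q rnd)
    (x : ℝ) (hx : x ∈ Fset p q)
    (e : ℕ) (he : 1 ≤ e) (hef : (2:ℝ)^(-(e:ℤ)) ∈ Fset p q)
    (m : ℕ) (hm : (m : ℤ) = ⌈((2^q + p : ℚ)) / (e : ℚ)⌉) :
    iterMul rnd ((2:ℝ)^(-(e:ℤ))) x m = 0 :=
  stmt_6_general p q hp rnd hrnd x hx e he m hm

end FPPaper
end

section
/- For the sigmoid function σ(x) = 1/(1+e^{−x}), the two-sided bound 4^x ≤ σ(x) ≤ 2^x holds for all x ≤ −2, and moreover 4^x ≤ σ'(x) ≤ 2^x for all x ≤ −2, where σ'(x) = σ(x)(1 − σ(x)). -/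
/-!
Write `σ` for the sigmoid. Since `σ x (1 - σ x) ≤ σ x`, it suffices to bound `σ x` above and
`σ x (1 - σ x)` below. Above: `σ x ≤ eˣ ≤ 2 ^ x` for `x ≤ 0`, as `2 ≤ e`. Below:
`σ x (1 - σ x) = eˣ / (1 + eˣ)²`, which for `x ≤ -2` is at least `eˣ / (1 + e⁻²)²`, while
`4 ^ x = eˣ (4 / e) ^ x ≤ eˣ (e / 4)²` because `4 / e > 1`. So it remains that
`1 + e⁻² ≤ 4 / e`, i.e. `e + e⁻¹ ≤ 4`.
-/

open Real

/-- Logistic sigmoid. -/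
noncomputable def sigmoid (x : ℝ) : ℝ := 1 / (1 + Real.exp (-x))

theorem sigmoid_eq_real_sigmoid (x : ℝ) : _root_.sigmoid x = Real.sigmoid x := by
  rw [_root_.sigmoid, Real.sigmoid_def, one_div]

namespace Real

theorem sigmoid_le_exp (x : ℝ) : Real.sigmoid x ≤ exp x := by
  rw [sigmoid_def, ← inv_inv (exp x), ← exp_neg]
  gcongr
  linarith

theorem sigmoid_mul_one_sub_sigmoid_le (x : ℝ) :
    Real.sigmoid x * (1 - Real.sigmoid x) ≤ Real.sigmoid x :=
  mul_le_of_le_one_right (sigmoid_nonneg x) (by linarith [sigmoid_pos x])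

theorem sigmoid_mul_one_sub_sigmoid (x : ℝ) :
    Real.sigmoid x * (1 - Real.sigmoid x) = exp x / (1 + exp x) ^ 2 := by
  rw [← sigmoid_neg, sigmoid_def, sigmoid_def, neg_neg, exp_neg]
  field

theorem exp_div_sq_le_sigmoid_mul_one_sub_sigmoid {x a : ℝ} (hxa : x ≤ a) :
    exp x / (1 + exp a) ^ 2 ≤ Real.sigmoid x * (1 - Real.sigmoid x) := by
  rw [sigmoid_mul_one_sub_sigmoid]
  gcongr

theorem rpow_eq_exp_mul_div_exp_one_rpow {b : ℝ} (hb : 0 < b) (x : ℝ) :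
    b ^ x = exp x * (b / exp 1) ^ x := by
  rw [div_rpow hb.le (exp_pos 1).le, exp_one_rpow]
  field

theorem exp_le_rpow_of_nonpos {b x : ℝ} (hb0 : 0 < b) (hb : b ≤ exp 1) (hx : x ≤ 0) :
    exp x ≤ b ^ x := by
  rw [rpow_eq_exp_mul_div_exp_one_rpow hb0]
  refine le_mul_of_one_le_right (exp_pos x).le (one_le_rpow_of_pos_of_le_one_of_nonpos ?_ ?_ hx)
  · exact div_pos hb0 (exp_pos 1)
  · rwa [div_le_one (exp_pos 1)]

theorem rpow_le_exp_mul_div_exp_one_rpow {b x a : ℝ} (hb : exp 1 ≤ b) (hxa : x ≤ a) :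
    b ^ x ≤ exp x * (b / exp 1) ^ a := by
  rw [rpow_eq_exp_mul_div_exp_one_rpow ((exp_pos 1).trans_le hb)]
  gcongr
  rwa [one_le_div (exp_pos 1)]

theorem one_add_exp_neg_two_le : 1 + exp (-2) ≤ 4 / exp 1 := by
  have h : exp (-2) * exp 1 = exp (-1) := by rw [← exp_add]; norm_num
  rw [le_div_iff₀ (exp_pos 1), add_mul, h, one_mul]
  linarith [exp_one_lt_three, exp_neg_one_lt_half]

theorem sigmoid_le_two_rpow {x : ℝ} (hx : x ≤ 0) : Real.sigmoid x ≤ 2 ^ x :=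
  (sigmoid_le_exp x).trans (exp_le_rpow_of_nonpos two_pos exp_one_gt_two.le hx)

theorem four_rpow_le_sigmoid_mul_one_sub_sigmoid {x : ℝ} (hx : x ≤ -2) :
    (4 : ℝ) ^ x ≤ Real.sigmoid x * (1 - Real.sigmoid x) := by
  have h4e : exp 1 ≤ 4 := by linarith [exp_one_lt_three]
  calc (4 : ℝ) ^ x ≤ exp x * (4 / exp 1) ^ (-2 : ℝ) := rpow_le_exp_mul_div_exp_one_rpow h4e hx
    _ = exp x / (4 / exp 1) ^ 2 := by rw [rpow_neg_ofNat, zpow_neg, zpow_ofNat, ← div_eq_mul_inv]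
    _ ≤ exp x / (1 + exp (-2)) ^ 2 := by gcongr; exact one_add_exp_neg_two_le
    _ ≤ Real.sigmoid x * (1 - Real.sigmoid x) := exp_div_sq_le_sigmoid_mul_one_sub_sigmoid hx

end Real

theorem stmt_10 (x : ℝ) (hx : x ≤ -2) :
    ((4:ℝ)^x ≤ _root_.sigmoid x ∧ _root_.sigmoid x ≤ (2:ℝ)^x) ∧
    ((4:ℝ)^x ≤ _root_.sigmoid x * (1 - _root_.sigmoid x) ∧ _root_.sigmoid x * (1 - _root_.sigmoid x) ≤ (2:ℝ)^x) := by
  rw [sigmoid_eq_real_sigmoid]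
  have hlower := four_rpow_le_sigmoid_mul_one_sub_sigmoid hx
  have hupper := sigmoid_le_two_rpow (hx.trans (by norm_num))
  have hprod := sigmoid_mul_one_sub_sigmoid_le x
  exact ⟨⟨hlower.trans hprod, hupper⟩, ⟨hlower, hprod.trans hupper⟩⟩
end
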